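/- Let D ⊆ 𝒜 with |D| ≥ 2. For l ∈ {ML, LLL} define the mixing height H_m^l(D) := max_{z∈D} φ(z) − min over distinct pairs x, y ∈ D of A_c^l(x, y). Then min_{x≠y∈D} A_c^LLL(x, y) ≤ min_{x≠y∈D} A_c^ML(x, y), and consequently H_m^LLL(D) ≥ H_m^ML(D); i.e., the mixing height of any such subset under log-linear learning is at least its mixing height under Metropolis learning. -/
import Mathlib


open Finset Real Filter Topology

variable {n : ℕ} {A : Fin n → Type*}

section Defs
variable [∀ i, Fintype (A i)] [∀ i, DecidableEq (A i)] [∀ i, Nonempty (A i)]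

/-- `a` and `b` differ in exactly coordinate `i`. -/
def Neighbor (a b : ∀ i, A i) (i : Fin n) : Prop :=
  a i ≠ b i ∧ ∀ j, j ≠ i → a j = b j

instance (a b : ∀ i, A i) (i : Fin n) : Decidable (Neighbor a b i) :=
  inferInstanceAs (Decidable (_ ∧ _))

/-- `φ` is a potential function for the game with utilities `U`. -/
def IsPotential (U : Fin n → (∀ i, A i) → ℝ) (φ : (∀ i, A i) → ℝ) : Prop :=
  ∀ (i : Fin n) (a : ∀ j, A j) (α α' : A i),
    U i (Function.update a i α) - U i (Function.update a i α')
      = φ (Function.update a i α) - φ (Function.update a i α')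

/-- Best attainable utility of player `i` against `a₋ᵢ`. -/
noncomputable def bestVal (U : Fin n → (∀ i, A i) → ℝ) (i : Fin n) (a : ∀ j, A j) : ℝ :=
  Finset.univ.sup' Finset.univ_nonempty fun β : A i => U i (Function.update a i β)

open Classical in
/-- Best response set of player `i` against `a₋ᵢ`. -/
noncomputable def BR (U : Fin n → (∀ i, A i) → ℝ) (i : Fin n) (a : ∀ j, A j) : Finset (A i) :=
  Finset.univ.filter fun β => U i (Function.update a i β) = bestVal U i a

/-- Metropolis learning transition cost. -/
noncomputable def VML (U : Fin n → (∀ i, A i) → ℝ) (a b : ∀ i, A i) : ℝ :=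
  ∑ i, if a i ≠ b i then max (U i a - U i b) 0 else 0

/-- Log-linear learning transition cost. -/
noncomputable def VLLL (U : Fin n → (∀ i, A i) → ℝ) (a b : ∀ i, A i) : ℝ :=
  ∑ i, if a i ≠ b i then bestVal U i a - U i b else 0

noncomputable def PMLoff (U : Fin n → (∀ i, A i) → ℝ) (T : ℝ) (a b : ∀ i, A i) : ℝ :=
  ∑ i, if Neighbor a b i then
    (1 / ((n : ℝ) * (Fintype.card (A i) : ℝ))) * Real.exp (-(max (U i a - U i b) 0) / T)
  else 0

/-- Metropolis learning transition matrix. -/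
noncomputable def PML (U : Fin n → (∀ i, A i) → ℝ) (T : ℝ) (a b : ∀ i, A i) : ℝ :=
  if a = b then 1 - ∑ c, PMLoff U T a c else PMLoff U T a b

noncomputable def PLLLoff (U : Fin n → (∀ i, A i) → ℝ) (T : ℝ) (a b : ∀ i, A i) : ℝ :=
  ∑ i, if Neighbor a b i then
    (1 / (n : ℝ)) * Real.exp (U i b / T) / ∑ β : A i, Real.exp (U i (Function.update a i β) / T)
  else 0

/-- Log-linear learning transition matrix. -/
noncomputable def PLLL (U : Fin n → (∀ i, A i) → ℝ) (T : ℝ) (a b : ∀ i, A i) : ℝ :=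
  if a = b then 1 - ∑ c, PLLLoff U T a c else PLLLoff U T a b

/-- The normalizing constant `Z_i(a₋ᵢ)`. -/
noncomputable def Zi (U : Fin n → (∀ i, A i) → ℝ) (T : ℝ) (i : Fin n) (a : ∀ j, A j) : ℝ :=
  ∑ β : A i, Real.exp (-(bestVal U i a - U i (Function.update a i β)) / T)

/-- The Gibbs distribution. -/
noncomputable def gibbs (φ : (∀ i, A i) → ℝ) (T : ℝ) (a : ∀ i, A i) : ℝ :=
  Real.exp (φ a / T) / ∑ b, Real.exp (φ b / T)

/-- Nash equilibrium. -/
def IsNash (U : Fin n → (∀ i, A i) → ℝ) (a : ∀ i, A i) : Prop :=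
  ∀ (i : Fin n) (α : A i), U i (Function.update a i α) ≤ U i a

/-- No player is ever indifferent between two of its own actions. -/
def TieFree (U : Fin n → (∀ i, A i) → ℝ) : Prop :=
  ∀ (i : Fin n) (a : ∀ j, A j) (α α' : A i), α ≠ α' →
    U i (Function.update a i α) ≠ U i (Function.update a i α')

/-- `ω 0, ω 1, …, ω p` is a path: pairwise-distinct entries, consecutive entries neighbors. -/
def IsPath (ω : ℕ → ∀ i, A i) (p : ℕ) : Prop :=
  (∀ k ≤ p, ∀ l ≤ p, ω k = ω l → k = l) ∧ ∀ k < p, ∃ i, Neighbor (ω k) (ω (k + 1)) i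

/-- Zero-cost paths from `a` to the set `B` w.r.t. the cost `V`, encoded as (length, path). -/
def ZPaths (V : (∀ i, A i) → (∀ i, A i) → ℝ) (a : ∀ i, A i) (B : Set (∀ i, A i)) :
    Set (ℕ × (ℕ → ∀ i, A i)) :=
  {q | IsPath q.2 q.1 ∧ q.2 0 = a ∧ q.2 q.1 ∈ B ∧ ∀ k < q.1, V (q.2 k) (q.2 (k + 1)) = 0}

/-- Minimal length of a zero-cost path from `a` to `B`. -/
noncomputable def minLen (V : (∀ i, A i) → (∀ i, A i) → ℝ) (a : ∀ i, A i)
    (B : Set (∀ i, A i)) : ℕ :=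
  sInf {p | ∃ ω, (p, ω) ∈ ZPaths V a B}

/-- Maximal length of a zero-cost path from `a` to `B`. -/
noncomputable def maxLen (V : (∀ i, A i) → (∀ i, A i) → ℝ) (a : ∀ i, A i)
    (B : Set (∀ i, A i)) : ℕ :=
  sSup {p | ∃ ω, (p, ω) ∈ ZPaths V a B}

/-- Communication altitude w.r.t. the cost `V` and potential `φ`. -/
noncomputable def Ac (V : (∀ i, A i) → (∀ i, A i) → ℝ) (φ : (∀ i, A i) → ℝ)
    (x y : ∀ i, A i) : ℝ :=
  sSup {v | ∃ (p : ℕ) (ω : ℕ → ∀ i, A i), 0 < p ∧ IsPath ω p ∧ ω 0 = x ∧ ω p = y ∧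
    v = ⨅ k : Fin p, (φ (ω k) - V (ω k) (ω (k + 1)))}

/-- `max_i |A_i|`. -/
noncomputable def mMax (A : Fin n → Type*) [∀ i, Fintype (A i)] : ℕ :=
  ⨆ i : Fin n, Fintype.card (A i)

/-- `min_i |A_i|`. -/
noncomputable def mMin (A : Fin n → Type*) [∀ i, Fintype (A i)] : ℕ :=
  ⨅ i : Fin n, Fintype.card (A i)

/-- `Z_max(T)`. -/
noncomputable def Zmax (U : Fin n → (∀ i, A i) → ℝ) (T : ℝ) : ℝ :=
  ⨆ i : Fin n, ⨆ a : ∀ j, A j, Zi U T i a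

noncomputable def GammaML (A : Fin n → Type*) [∀ i, Fintype (A i)] : ℝ :=
  1 / ((n : ℝ) * (mMax A : ℝ))

noncomputable def GammaLLL (U : Fin n → (∀ i, A i) → ℝ) (T : ℝ) : ℝ :=
  1 / ((n : ℝ) * Zmax U T)


lemma vml_nonneg (U : Fin n → (∀ i, A i) → ℝ) (a b : ∀ i, A i) : 0 ≤ VML U a b := by
  apply Finset.sum_nonneg
  intro i _
  split
  · exact le_max_right _ _
  · exact le_refl 0

lemma neighbor_update {a b : ∀ i, A i} {i : Fin n} (h : Neighbor a b i) :
    b = Function.update a i (b i) := by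
  funext j
  by_cases hj : j = i
  · subst hj; simp
  · rw [Function.update_of_ne hj]; exact (h.2 j hj).symm

lemma le_bestVal (U : Fin n → (∀ i, A i) → ℝ) (i : Fin n) (a : ∀ j, A j) (β : A i) :
    U i (Function.update a i β) ≤ bestVal U i a :=
  Finset.le_sup' (fun β : A i => U i (Function.update a i β)) (Finset.mem_univ β)

lemma vml_le_vlll (U : Fin n → (∀ i, A i) → ℝ) {a b : ∀ i, A i} {i : Fin n}
    (h : Neighbor a b i) : VML U a b ≤ VLLL U a b := by
  apply Finset.sum_le_sum
  intro j _
  split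
  · rename_i hj
    have hji : j = i := by
      by_contra hne
      exact hj (h.2 j hne)
    subst hji
    have hb := neighbor_update h
    have h1 : U j a ≤ bestVal U j a := by
      have := le_bestVal U j a (a j)
      rwa [Function.update_eq_self] at this
    have h2 : U j b ≤ bestVal U j a := by
      have := le_bestVal U j a (b j)
      rwa [← hb] at this
    exact max_le (by linarith) (by linarith)
  · exact le_refl 0

lemma exists_path {x y : ∀ i, A i} (hxy : x ≠ y) :
    ∃ (p : ℕ) (ω : ℕ → ∀ i, A i), 0 < p ∧ IsPath ω p ∧ ω 0 = x ∧ ω p = y := by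
  classical
  set s : Finset (Fin n) := Finset.univ.filter (fun i => x i ≠ y i) with hs
  set m := s.card with hm
  have hmem : ∀ i, i ∈ s ↔ x i ≠ y i := by intro i; simp [hs]
  have hm0 : 0 < m := by
    rcases Function.ne_iff.1 hxy with ⟨i, hi⟩
    exact Finset.card_pos.2 ⟨i, (hmem i).2 hi⟩
  let e : Fin m ≃o s := s.orderIsoOfFin rfl
  set ω : ℕ → ∀ i, A i := fun k i =>
    if h : i ∈ s then (if ((e.symm ⟨i, h⟩ : Fin m) : ℕ) < k then y i else x i) else x i
    with hω
  refine ⟨m, ω, hm0, ⟨?_, ?_⟩, ?_, ?_⟩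
  · -- distinctness
    intro k hk l hl heq
    by_contra hkl
    rcases lt_or_gt_of_ne hkl with hlt | hlt
    · have hkm : k < m := lt_of_lt_of_le hlt hl
      set i₀ : Fin n := ((e ⟨k, hkm⟩ : s) : Fin n) with hi₀
      have hmem₀ : (i₀ : Fin n) ∈ s := (e ⟨k, hkm⟩).2
      have hsymm : e.symm ⟨i₀, hmem₀⟩ = ⟨k, hkm⟩ := by
        simp [hi₀]
      have h1 : ω k i₀ = x i₀ := by
        simp only [hω, dif_pos hmem₀, hsymm]
        simp
      have h2 : ω l i₀ = y i₀ := by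
        simp only [hω, dif_pos hmem₀, hsymm]
        simp [hlt]
      have := (hmem i₀).1 hmem₀
      rw [heq, h2] at h1
      exact this h1.symm
    · have hkm : l < m := lt_of_lt_of_le hlt hk
      set i₀ : Fin n := ((e ⟨l, hkm⟩ : s) : Fin n) with hi₀
      have hmem₀ : (i₀ : Fin n) ∈ s := (e ⟨l, hkm⟩).2
      have hsymm : e.symm ⟨i₀, hmem₀⟩ = ⟨l, hkm⟩ := by
        simp [hi₀]
      have h1 : ω l i₀ = x i₀ := by
        simp only [hω, dif_pos hmem₀, hsymm]
        simp
      have h2 : ω k i₀ = y i₀ := by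
        simp only [hω, dif_pos hmem₀, hsymm]
        simp [hlt]
      have := (hmem i₀).1 hmem₀
      rw [heq, h1] at h2
      exact this h2
  · -- neighbors
    intro k hk
    set i₀ : Fin n := ((e ⟨k, hk⟩ : s) : Fin n) with hi₀
    have hmem₀ : (i₀ : Fin n) ∈ s := (e ⟨k, hk⟩).2
    have hsymm : e.symm ⟨i₀, hmem₀⟩ = ⟨k, hk⟩ := by simp [hi₀]
    refine ⟨i₀, ?_, ?_⟩
    · have h1 : ω k i₀ = x i₀ := by
        simp only [hω, dif_pos hmem₀, hsymm]; simp
      have h2 : ω (k + 1) i₀ = y i₀ := by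
        simp only [hω, dif_pos hmem₀, hsymm]; simp
      rw [h1, h2]
      exact (hmem i₀).1 hmem₀
    · intro j hj
      by_cases hjs : j ∈ s
      · have hne : e.symm ⟨j, hjs⟩ ≠ ⟨k, hk⟩ := by
          intro hcontra
          apply hj
          have : (⟨j, hjs⟩ : s) = e ⟨k, hk⟩ := by
            rw [← hcontra]; simp
          rw [hi₀, ← this]
        have hne' : ((e.symm ⟨j, hjs⟩ : Fin m) : ℕ) ≠ k := by
          intro hcontra
          exact hne (Fin.ext hcontra)
        have : ((e.symm ⟨j, hjs⟩ : Fin m) : ℕ) < k ↔ ((e.symm ⟨j, hjs⟩ : Fin m) : ℕ) < k + 1 :=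
          ⟨fun h => Nat.lt_succ_of_lt h, fun h => lt_of_le_of_ne (Nat.lt_succ_iff.1 h) hne'⟩
        simp only [hω, dif_pos hjs]
        by_cases hlt : ((e.symm ⟨j, hjs⟩ : Fin m) : ℕ) < k
        · rw [if_pos hlt, if_pos (this.1 hlt)]
        · rw [if_neg hlt, if_neg (fun h => hlt (this.2 h))]
      · simp only [hω, dif_neg hjs]
  · -- ω 0 = x
    funext i
    simp only [hω]
    split
    · simp
    · rfl
  · -- ω m = y
    funext i
    by_cases hi : i ∈ s
    · simp only [hω, dif_pos hi]
      rw [if_pos (e.symm ⟨i, hi⟩).isLt]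
    · simp only [hω, dif_neg hi]
      by_contra h
      exact hi ((hmem i).2 h)

lemma ac_le (U : Fin n → (∀ i, A i) → ℝ) (φ : (∀ i, A i) → ℝ) {x y : ∀ i, A i} (hxy : x ≠ y) :
    Ac (VLLL U) φ x y ≤ Ac (VML U) φ x y := by
  set T : Set ℝ := {v | ∃ (p : ℕ) (ω : ℕ → ∀ i, A i), 0 < p ∧ IsPath ω p ∧ ω 0 = x ∧ ω p = y ∧
    v = ⨅ k : Fin p, (φ (ω k) - VML U (ω k) (ω (k + 1)))} with hT
  have hbddT : BddAbove T := by
    refine ⟨φ x, ?_⟩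
    rintro v ⟨p, ω, hp, hpath, h0, hpy, rfl⟩
    have h1 : (⨅ k : Fin p, (φ (ω k) - VML U (ω k) (ω (k + 1))))
        ≤ φ (ω (0 : ℕ)) - VML U (ω 0) (ω 1) :=
      ciInf_le (Finite.bddBelow_range _) (⟨0, hp⟩ : Fin p)
    calc (⨅ k : Fin p, (φ (ω k) - VML U (ω k) (ω (k + 1)))) ≤ φ (ω 0) - VML U (ω 0) (ω 1) := h1
      _ ≤ φ (ω 0) := by have := vml_nonneg U (ω 0) (ω 1); linarith
      _ = φ x := by rw [h0]
  obtain ⟨p₀, ω₀, hp₀, hpath₀, h0₀, hpy₀⟩ := exists_path hxy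
  have hSne : Set.Nonempty {v | ∃ (p : ℕ) (ω : ℕ → ∀ i, A i), 0 < p ∧ IsPath ω p ∧ ω 0 = x ∧
      ω p = y ∧ v = ⨅ k : Fin p, (φ (ω k) - VLLL U (ω k) (ω (k + 1)))} :=
    ⟨_, p₀, ω₀, hp₀, hpath₀, h0₀, hpy₀, rfl⟩
  refine csSup_le hSne ?_
  rintro v ⟨p, ω, hp, hpath, h0, hpy, rfl⟩
  have key : (⨅ k : Fin p, (φ (ω k) - VLLL U (ω k) (ω (k + 1))))
      ≤ ⨅ k : Fin p, (φ (ω k) - VML U (ω k) (ω (k + 1))) := by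
    apply ciInf_mono (Finite.bddBelow_range _)
    intro k
    obtain ⟨i, hnb⟩ := hpath.2 k k.isLt
    exact sub_le_sub_left (vml_le_vlll U hnb) _
  exact key.trans (le_csSup hbddT ⟨p, ω, hp, hpath, h0, hpy, rfl⟩)

/-- For `D` with `|D| ≥ 2`,
`min_{x≠y∈D} A_c^LLL(x,y) ≤ min_{x≠y∈D} A_c^ML(x,y)`, and consequently
`H_m^LLL(D) ≥ H_m^ML(D)`. -/
theorem statement19
    (U : Fin n → (∀ i, A i) → ℝ) (φ : (∀ i, A i) → ℝ) (hpot : IsPotential U φ)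
    (D : Finset (∀ j, A j)) (hcard : 1 < D.card) (hne : D.Nonempty)
    (hoff : D.offDiag.Nonempty) :
    D.offDiag.inf' hoff (fun q => Ac (VLLL U) φ q.1 q.2)
        ≤ D.offDiag.inf' hoff (fun q => Ac (VML U) φ q.1 q.2)
    ∧ D.sup' hne φ - D.offDiag.inf' hoff (fun q => Ac (VML U) φ q.1 q.2)
        ≤ D.sup' hne φ - D.offDiag.inf' hoff (fun q => Ac (VLLL U) φ q.1 q.2) := by
  have main : D.offDiag.inf' hoff (fun q => Ac (VLLL U) φ q.1 q.2)
      ≤ D.offDiag.inf' hoff (fun q => Ac (VML U) φ q.1 q.2) := by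
    apply Finset.le_inf'
    intro q hq
    have hne' : q.1 ≠ q.2 := (Finset.mem_offDiag.1 hq).2.2
    exact (Finset.inf'_le _ hq).trans (ac_le U φ hne')
  exact ⟨main, sub_le_sub_left main _⟩

end Defs
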